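/- arXiv:2410.10736 — 3 statements merged into one kernel-verified Lean document; each statement's English description precedes it below -/
import Mathlib

section
/- For linear classifiers f(x) = w·x with ‖w‖₂ = 1, the adversarial robust reject option loss ℓ_d^γ(yf(x), ρ) := (1−d)·sup_{‖x−x′‖≤γ} 𝟙{yf(x′) < −ρ} + d·sup_{‖x−x′‖≤γ} 𝟙{yf(x′) ≤ ρ} equals the γ-right-shifted reject option loss (1−d)·𝟙{yf(x) < −ρ+γ} + d·𝟙{yf(x) ≤ ρ+γ}. -/
/-!
A linear functional `⟪u, ·⟫` attains its minimum `⟪u, x⟫ - γ‖u‖` over the closed ball of radius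
`γ` around `x`, at `x - γ • (u / ‖u‖)`. Writing `y * ⟪w, x'⟫ = ⟪y • w, x'⟫` with `‖y • w‖ = 1`,
the perturbed margin `y f(x')` thus sweeps out everything down to `y f(x) - γ`, so each supremum
of an indicator over the ball is the indicator of the corresponding threshold shifted by `γ`.
-/

open scoped RealInnerProductSpace

open scoped Classical in
theorem sSup_image_ite_one_zero {α : Type*} {S : Set α} (hS : S.Nonempty) (P : α → Prop)
    [DecidablePred P] :
    sSup ((fun a => if P a then (1 : ℝ) else 0) '' S) = if ∃ a ∈ S, P a then 1 else 0 := by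
  split_ifs with h
  · obtain ⟨a, ha, hPa⟩ := h
    have hle : ∀ b ∈ (fun a => if P a then (1 : ℝ) else 0) '' S, b ≤ 1 := by
      rintro _ ⟨a', -, rfl⟩
      dsimp only
      split_ifs <;> norm_num
    exact le_antisymm (csSup_le (hS.image _) hle) (le_csSup ⟨1, hle⟩ ⟨a, ha, if_pos hPa⟩)
  · push Not at h
    rw [Set.image_congr fun a ha => if_neg (h a ha), hS.image_const, csSup_singleton]

theorem IsLeast.exists_le_iff {α : Type*} [Preorder α] {s : Set α} {a b : α}
    (h : IsLeast s a) : (∃ c ∈ s, c ≤ b) ↔ a ≤ b :=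
  ⟨fun ⟨_, hc, hcb⟩ => (h.2 hc).trans hcb, fun hab => ⟨a, h.1, hab⟩⟩

section InnerProductSpace

variable {E : Type*} [NormedAddCommGroup E] [InnerProductSpace ℝ E]

theorem inner_sub_mul_norm_le_of_mem_closedBall (u : E) {x x' : E} {r : ℝ}
    (hx' : x' ∈ Metric.closedBall x r) : ⟪u, x⟫ - r * ‖u‖ ≤ ⟪u, x'⟫ := by
  have hdist : ‖x - x'‖ ≤ r := by rw [← dist_eq_norm, dist_comm]; exact hx'
  have := real_inner_le_norm u (x - x')
  rw [inner_sub_right] at this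
  nlinarith [norm_nonneg u]

theorem exists_mem_closedBall_inner_eq_sub_mul_norm (u x : E) {r : ℝ} (hr : 0 ≤ r) :
    ∃ x' ∈ Metric.closedBall x r, ⟪u, x'⟫ = ⟪u, x⟫ - r * ‖u‖ := by
  rcases eq_or_ne u 0 with rfl | hu
  · exact ⟨x, Metric.mem_closedBall_self hr, by simp⟩
  have hu' : ‖u‖ ≠ 0 := norm_ne_zero_iff.mpr hu
  refine ⟨x - (r / ‖u‖) • u, ?_, ?_⟩
  · rw [Metric.mem_closedBall, dist_eq_norm, sub_sub_cancel_left, norm_neg,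
      norm_smul_of_nonneg (by positivity), div_mul_cancel₀ _ hu']
  · rw [inner_sub_right, real_inner_smul_right, real_inner_self_eq_norm_sq]
    field_simp

theorem isLeast_image_inner_closedBall (u x : E) {r : ℝ} (hr : 0 ≤ r) :
    IsLeast ((fun x' => ⟪u, x'⟫) '' Metric.closedBall x r) (⟪u, x⟫ - r * ‖u‖) := by
  obtain ⟨x', hx', hval⟩ := exists_mem_closedBall_inner_eq_sub_mul_norm u x hr
  exact ⟨⟨x', hx', hval⟩, by
    rintro _ ⟨x'', hx'', rfl⟩
    exact inner_sub_mul_norm_le_of_mem_closedBall u hx''⟩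

end InnerProductSpace

theorem adv_robust_reject_loss_linear_eq_shift_general {n : ℕ} (w x : EuclideanSpace ℝ (Fin n))
    (hw : ‖w‖ = 1) (y : ℝ) (hy : y = -1 ∨ y = 1) (d ρ γ : ℝ)
    (hγ : 0 < γ) :
    (1 - d) * sSup ((fun x' => if y * (inner ℝ w x' : ℝ) < -ρ then (1 : ℝ) else 0) ''
        Metric.closedBall x γ)
      + d * sSup ((fun x' => if y * (inner ℝ w x' : ℝ) ≤ ρ then (1 : ℝ) else 0) ''
        Metric.closedBall x γ)
    = (1 - d) * (if y * (inner ℝ w x : ℝ) < -ρ + γ then (1 : ℝ) else 0)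
      + d * (if y * (inner ℝ w x : ℝ) ≤ ρ + γ then (1 : ℝ) else 0) := by
  have hyw : ‖y • w‖ = 1 := by rcases hy with rfl | rfl <;> simp [hw]
  have hleast := isLeast_image_inner_closedBall (y • w) x hγ.le
  rw [hyw, mul_one] at hleast
  have hball : (Metric.closedBall x γ).Nonempty := Metric.nonempty_closedBall.mpr hγ.le
  simp only [← real_inner_smul_left]
  rw [sSup_image_ite_one_zero hball, sSup_image_ite_one_zero hball]
  congr 3
  · rw [← sub_lt_iff_lt_add, isGLB_lt_iff hleast.isGLB, Set.exists_mem_image]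
  · rw [← sub_le_iff_le_add, ← hleast.exists_le_iff, Set.exists_mem_image]

/-- For linear classifiers `f x = w ⬝ x` with `‖w‖ = 1`, the adversarial robust
reject option loss equals the `γ`-right-shifted reject option loss. -/
theorem adv_robust_reject_loss_linear_eq_shift {n : ℕ} (w x : EuclideanSpace ℝ (Fin n))
    (hw : ‖w‖ = 1) (y : ℝ) (hy : y = -1 ∨ y = 1) (d ρ γ : ℝ)
    (hd : d ∈ Set.Ioo (0 : ℝ) (1 / 2)) (hρ : 0 < ρ) (hγ : 0 < γ) :
    (1 - d) * sSup ((fun x' => if y * (inner ℝ w x' : ℝ) < -ρ then (1 : ℝ) else 0) ''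
        Metric.closedBall x γ)
      + d * sSup ((fun x' => if y * (inner ℝ w x' : ℝ) ≤ ρ then (1 : ℝ) else 0) ''
        Metric.closedBall x γ)
    = (1 - d) * (if y * (inner ℝ w x : ℝ) < -ρ + γ then (1 : ℝ) else 0)
      + d * (if y * (inner ℝ w x : ℝ) ≤ ρ + γ then (1 : ℝ) else 0) :=
  adv_robust_reject_loss_linear_eq_shift_general w x hw y hy d ρ γ hγ
end

section
/- For the target loss ℓ_d^γ(t, ρ) = (1−d)·𝟙{t < −ρ+γ} + d·𝟙{t ≤ ρ+γ} with linear classifiers, the minimal conditional risk satisfies inf_{α ∈ ℝ} [η·ℓ_d^γ(α, ρ) + (1−η)·ℓ_d^γ(−α, ρ)] = min{η, 1−η, d} for every η ∈ [0,1], provided ρ > γ > 0 and d ∈ (0, 1/2). -/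
set_option maxHeartbeats 1000000


/-- The minimal conditional risk of the adversarial robust reject option loss
`ℓ_d^γ(t) = (1−d)·𝟙{t < −ρ+γ} + d·𝟙{t ≤ ρ+γ}` is `min{η, 1−η, d}`. -/
theorem minimal_conditional_risk_adv_reject (d ρ γ : ℝ)
    (hd : d ∈ Set.Ioo (0 : ℝ) (1 / 2)) (hγ : 0 < γ) (hργ : γ < ρ) :
    ∀ η ∈ Set.Icc (0 : ℝ) 1,
      sInf (Set.range (fun α : ℝ =>
          η * ((1 - d) * (if α < -ρ + γ then (1 : ℝ) else 0)
                + d * (if α ≤ ρ + γ then (1 : ℝ) else 0))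
            + (1 - η) * ((1 - d) * (if -α < -ρ + γ then (1 : ℝ) else 0)
                + d * (if -α ≤ ρ + γ then (1 : ℝ) else 0))))
        = min (min η (1 - η)) d := by
  intro η hη
  obtain ⟨hη0, hη1⟩ := hη
  obtain ⟨hd0, hd1⟩ := hd
  set f : ℝ → ℝ := fun α : ℝ =>
          η * ((1 - d) * (if α < -ρ + γ then (1 : ℝ) else 0)
                + d * (if α ≤ ρ + γ then (1 : ℝ) else 0))
            + (1 - η) * ((1 - d) * (if -α < -ρ + γ then (1 : ℝ) else 0)
                + d * (if -α ≤ ρ + γ then (1 : ℝ) else 0)) with hf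
  set m : ℝ := min (min η (1 - η)) d with hm
  have hm1 : m ≤ η := le_trans (min_le_left _ _) (min_le_left _ _)
  have hm2 : m ≤ 1 - η := le_trans (min_le_left _ _) (min_le_right _ _)
  have hm3 : m ≤ d := min_le_right _ _
  have key : ∀ α : ℝ, m ≤ f α := by
    intro α
    simp only [hf]
    by_cases h1 : α < -ρ + γ <;> by_cases h2 : α ≤ ρ + γ <;>
      by_cases h3 : -α < -ρ + γ <;> by_cases h4 : -α ≤ ρ + γ <;>
      simp only [h1, h2, h3, h4, if_true, if_false] <;> ring_nf <;>
      first
      | (exfalso; linarith)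
      | nlinarith [mul_nonneg hη0 hd0.le, mul_nonneg (by linarith : (0:ℝ) ≤ 1 - η) hd0.le,
          mul_nonneg hη0 (by linarith : (0:ℝ) ≤ 1 - d),
          mul_nonneg (by linarith : (0:ℝ) ≤ 1 - η) (by linarith : (0:ℝ) ≤ 1 - d)]
  have hbdd : BddBelow (Set.range f) := ⟨m, by rintro _ ⟨α, rfl⟩; exact key α⟩
  apply le_antisymm
  · apply le_min
    apply le_min
    · have : f (-(ρ + γ + 1)) = η := by
        simp only [hf]
        rw [if_pos (by linarith), if_pos (by linarith), if_neg (by linarith),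
          if_neg (by linarith)]
        ring
      calc sInf (Set.range f) ≤ f (-(ρ + γ + 1)) := csInf_le hbdd ⟨_, rfl⟩
        _ = η := this
    · have : f (ρ + γ + 1) = 1 - η := by
        simp only [hf]
        rw [if_neg (by linarith), if_neg (by linarith), if_pos (by linarith),
          if_pos (by linarith)]
        ring
      calc sInf (Set.range f) ≤ f (ρ + γ + 1) := csInf_le hbdd ⟨_, rfl⟩
        _ = 1 - η := this
    · have : f 0 = d := by
        simp only [hf]
        rw [if_neg (by linarith), if_pos (by linarith)]
        norm_num
        rw [if_neg (by linarith), if_pos (by linarith)]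
        ring
      calc sInf (Set.range f) ≤ f 0 := csInf_le hbdd ⟨_, rfl⟩
        _ = d := this
  · exact le_csInf ⟨f 0, ⟨0, rfl⟩⟩ (by rintro _ ⟨α, rfl⟩; exact key α)
end

section
/- For the target loss ℓ_d^γ as above with ρ > γ, d ∈ (0,1/2), and η such that min{η, 1−η} ≥ d, the excess conditional risk ΔC(α, η) := C(α, η) − min{η, 1−η, d} equals η − d for α < −ρ − γ, equals (1−d)η for −ρ−γ ≤ α < −ρ+γ, equals 0 for −ρ+γ ≤ α ≤ ρ−γ, equals (1−d)(1−η) for ρ−γ < α ≤ ρ+γ, and equals 1 − η − d for α > ρ+γ. -/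
/-- Piecewise values of the excess conditional risk of `ℓ_d^γ` in the rejection
regime `d ≤ η ≤ 1 − d` (where the minimal conditional risk is `d`). -/
theorem excess_risk_target_rejection_regime (d ρ γ η : ℝ)
    (hd : d ∈ Set.Ioo (0 : ℝ) (1 / 2)) (hγ : 0 < γ) (hργ : γ < ρ)
    (hη₁ : d ≤ η) (hη₂ : η ≤ 1 - d) :
    let L : ℝ → ℝ := fun t =>
      (1 - d) * (if t < -ρ + γ then (1 : ℝ) else 0)
        + d * (if t ≤ ρ + γ then (1 : ℝ) else 0)
    let C : ℝ → ℝ := fun α => η * L α + (1 - η) * L (-α)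
    let ΔC : ℝ → ℝ := fun α => C α - min (min η (1 - η)) d
    ∀ α : ℝ,
      (α < -ρ - γ → ΔC α = η - d) ∧
      (-ρ - γ ≤ α → α < -ρ + γ → ΔC α = (1 - d) * η) ∧
      (-ρ + γ ≤ α → α ≤ ρ - γ → ΔC α = 0) ∧
      (ρ - γ < α → α ≤ ρ + γ → ΔC α = (1 - d) * (1 - η)) ∧
      (ρ + γ < α → ΔC α = 1 - η - d) := by
  intro L C ΔC α
  have hmin : min (min η (1 - η)) d = d := by
    rw [min_eq_right]
    exact le_min hη₁ (by linarith)
  refine ⟨fun h => ?_, fun h1 h2 => ?_, fun h1 h2 => ?_, fun h1 h2 => ?_, fun h => ?_⟩ <;>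
    simp only [ΔC, C, L, hmin] <;>
    split_ifs <;> linarith
end
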